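/- Let d ≥ 1, let Σ ⊆ ℝ^d be uniformly discrete with separation r_Σ > 0 and quasi-one-dimensional with constant C, and let (μ_i)_{i∈Σ}, ℙ, p_i(ε) be as in the product-measure setup. Fix ε > 0, set δ := sup_{i∈Σ} p_i(ε), assume δ < 1, and let a > (1 − δ)^{−C}. Then for ℙ-almost every ω ∈ Ω there exists N ∈ ℕ such that for every n ≥ N there is r ∈ [a^n, a^{n+1} − n] for which the annulus A_{r,r+n} is ε-free for ω. -/

import Mathlib

open MeasureTheory Set

/-- The closed annulus `{x : r ≤ ‖x‖ ≤ R}` in `ℝ^d`. -/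
def annulus (d : ℕ) (r R : ℝ) : Set (EuclideanSpace ℝ (Fin d)) :=
  {x | r ≤ ‖x‖ ∧ ‖x‖ ≤ R}

/-- A set `U ⊆ ℝ^d` is `ε`-free for `ω` if `ω i ≤ ε` for all `i ∈ Σ ∩ U`. -/
def epsFree {d : ℕ} (S : Set (EuclideanSpace ℝ (Fin d))) (ε : ℝ)
    (ω : S → ℝ) (U : Set (EuclideanSpace ℝ (Fin d))) : Prop :=
  ∀ i : S, (i : EuclideanSpace ℝ (Fin d)) ∈ U → ω i ≤ ε

open scoped ENNReal

lemma aux_meas {ι : Type*} (u : Finset ι) (s : ι → Set ℝ) (hs : ∀ i, MeasurableSet (s i))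
    (K : Finset ℕ) (T : ℕ → Finset ι) (ε : ℝ) :
    MeasurableSet {ω : ι → ℝ | (∀ i ∈ u, ω i ∈ s i) ∧ ∀ k ∈ K, ∃ i ∈ T k, ε < ω i} := by
  have h1 : {ω : ι → ℝ | (∀ i ∈ u, ω i ∈ s i) ∧ ∀ k ∈ K, ∃ i ∈ T k, ε < ω i}
      = (⋂ i ∈ u, (fun ω : ι → ℝ => ω i) ⁻¹' s i)
        ∩ ⋂ k ∈ K, ⋃ i ∈ T k, (fun ω : ι → ℝ => ω i) ⁻¹' Ioi ε := by
    ext ω; simp [Set.mem_iInter, Set.mem_iUnion]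
  rw [h1]
  exact (u.measurableSet_biInter fun i _ => (measurable_pi_apply i) (hs i)).inter
    (K.measurableSet_biInter fun k _ =>
      (T k).measurableSet_biUnion fun i _ => (measurable_pi_apply i) measurableSet_Ioi)

lemma key_prod {ι : Type*} (μ : ι → Measure ℝ) (hprob : ∀ i, IsProbabilityMeasure (μ i))
    (P : Measure (ι → ℝ)) (hP : IsProbabilityMeasure P)
    (hprod : ∀ (t : Finset ι) (s : ι → Set ℝ), (∀ i, MeasurableSet (s i)) →
      P {ω | ∀ i ∈ t, ω i ∈ s i} = ∏ i ∈ t, μ i (s i))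
    (ε : ℝ) (T : ℕ → Finset ι) :
    ∀ (K : Finset ℕ), (∀ k ∈ K, ∀ l ∈ K, k ≠ l → Disjoint (T k) (T l)) →
    ∀ (u : Finset ι) (s : ι → Set ℝ), (∀ i, MeasurableSet (s i)) →
    (∀ k ∈ K, Disjoint u (T k)) →
    (P {ω | (∀ i ∈ u, ω i ∈ s i) ∧ ∀ k ∈ K, ∃ i ∈ T k, ε < ω i}).toReal
      = (∏ i ∈ u, (μ i (s i)).toReal) * ∏ k ∈ K, (1 - ∏ i ∈ T k, (μ i (Iic ε)).toReal) := by
  classical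
  haveI := hP
  intro K
  induction K using Finset.induction_on with
  | empty =>
    intro _ u s hs _
    simp only [Finset.notMem_empty, false_implies, implies_true, and_true, Finset.prod_empty,
      mul_one]
    rw [hprod u s hs, ENNReal.toReal_prod]
  | @insert m K hm IH =>
    intro hdisj u s hs hu
    have hdisjK : ∀ k ∈ K, ∀ l ∈ K, k ≠ l → Disjoint (T k) (T l) := fun k hk l hl =>
      hdisj k (Finset.mem_insert_of_mem hk) l (Finset.mem_insert_of_mem hl)
    have huK : ∀ k ∈ K, Disjoint u (T k) := fun k hk => hu k (Finset.mem_insert_of_mem hk)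
    have hum : Disjoint u (T m) := hu m (Finset.mem_insert_self m K)
    set s' : ι → Set ℝ := fun i => if i ∈ T m then Iic ε else s i with hs'def
    have hs' : ∀ i, MeasurableSet (s' i) := by
      intro i
      by_cases h : i ∈ T m <;> simp [hs'def, h, measurableSet_Iic, hs i]
    set X := {ω : ι → ℝ | (∀ i ∈ u, ω i ∈ s i) ∧ ∀ k ∈ K, ∃ i ∈ T k, ε < ω i} with hX
    set Y := {ω : ι → ℝ | (∀ i ∈ u ∪ T m, ω i ∈ s' i) ∧ ∀ k ∈ K, ∃ i ∈ T k, ε < ω i} with hY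
    have hbase : ∀ ω : ι → ℝ, (∀ i ∈ u ∪ T m, ω i ∈ s' i) ↔
        ((∀ i ∈ u, ω i ∈ s i) ∧ ∀ i ∈ T m, ω i ≤ ε) := by
      intro ω
      constructor
      · intro h
        refine ⟨fun i hi => ?_, fun i hi => ?_⟩
        · have := h i (Finset.mem_union_left _ hi)
          simpa only [s', if_neg (Finset.disjoint_left.mp hum hi)] using this
        · have := h i (Finset.mem_union_right _ hi)
          simpa only [s', if_pos hi, Set.mem_Iic] using this
      · rintro ⟨h1, h2⟩ i hi
        rcases Finset.mem_union.mp hi with hi | hi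
        · simp only [s', if_neg (Finset.disjoint_left.mp hum hi)]; exact h1 i hi
        · simp only [s', if_pos hi, Set.mem_Iic]; exact h2 i hi
    have hYX : Y ⊆ X := by
      intro ω hω
      exact ⟨((hbase ω).mp hω.1).1, hω.2⟩
    have hZ : {ω : ι → ℝ | (∀ i ∈ u, ω i ∈ s i) ∧ ∀ k ∈ insert m K, ∃ i ∈ T k, ε < ω i}
        = X \ Y := by
      ext ω
      simp only [hX, hY, Set.mem_setOf_eq, Set.mem_diff, Finset.mem_insert, hbase ω]
      constructor
      · rintro ⟨h1, h2⟩
        have hKbad : ∀ k ∈ K, ∃ i ∈ T k, ε < ω i := fun k hk => h2 k (Or.inr hk)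
        refine ⟨⟨h1, hKbad⟩, ?_⟩
        rintro ⟨⟨-, hmle⟩, -⟩
        obtain ⟨i, hi, hlt⟩ := h2 m (Or.inl rfl)
        exact absurd (hmle i hi) (not_le.mpr hlt)
      · rintro ⟨⟨h1, hKbad⟩, hnot⟩
        refine ⟨h1, ?_⟩
        rintro k (rfl | hk)
        · by_contra hno
          push_neg at hno
          exact hnot ⟨⟨h1, hno⟩, hKbad⟩
        · exact hKbad k hk
    have hXmeas : MeasurableSet X := aux_meas u s hs K T ε
    have hYmeas : MeasurableSet Y := aux_meas (u ∪ T m) s' hs' K T ε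
    have hPX := IH hdisjK u s hs huK
    have hPY := IH hdisjK (u ∪ T m) s' hs' ?_
    swap
    · intro k hk
      exact Finset.disjoint_union_left.mpr ⟨huK k hk,
        hdisj m (Finset.mem_insert_self m K) k (Finset.mem_insert_of_mem hk)
          (fun h => hm (h ▸ hk))⟩
    rw [hZ, measure_diff hYX hYmeas.nullMeasurableSet (measure_ne_top P Y),
      ENNReal.toReal_sub_of_le (measure_mono hYX) (measure_ne_top P X), hPX, hPY]
    have hsplit : (∏ i ∈ u ∪ T m, (μ i (s' i)).toReal)
        = (∏ i ∈ u, (μ i (s i)).toReal) * ∏ i ∈ T m, (μ i (Iic ε)).toReal := by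
      rw [Finset.prod_union hum]
      congr 1
      · exact Finset.prod_congr rfl fun i hi => by
          rw [hs'def]; simp [Finset.disjoint_left.mp hum hi]
      · exact Finset.prod_congr rfl fun i hi => by rw [hs'def]; simp [hi]
    rw [hsplit, Finset.prod_insert hm]
    ring


lemma count_aux {d C : ℕ} {S : Set (EuclideanSpace ℝ (Fin d))}
    (hfin : ∀ R : ℝ, 0 ≤ R → (S ∩ annulus d R (R + 1)).Finite)
    (hq1D : ∀ R : ℝ, 0 ≤ R → (S ∩ annulus d R (R + 1)).ncard ≤ C) :
    ∀ (n : ℕ) (r : ℝ), 0 ≤ r →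
      (S ∩ annulus d r (r + n)).Finite ∧ (S ∩ annulus d r (r + n)).ncard ≤ C * (n + 1) := by
  intro n
  induction n with
  | zero =>
    intro r hr
    have hann : annulus d r (r + (0:ℕ)) ⊆ annulus d r (r + 1) := by
      intro x hx
      obtain ⟨h1, h2⟩ := hx
      push_cast at h2
      exact ⟨h1, by linarith⟩
    refine ⟨(hfin r hr).subset (inter_subset_inter_right S hann), ?_⟩
    refine le_trans (Set.ncard_le_ncard (inter_subset_inter_right S hann) (hfin r hr)) ?_
    simpa using hq1D r hr
  | succ n IH =>
    intro r hr
    obtain ⟨hf1, hc1⟩ := IH r hr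
    have hf2 := hfin (r + n) (by positivity)
    have hc2 := hq1D (r + n) (by positivity)
    have hsub : annulus d r (r + ((n:ℕ)+1:ℕ)) ⊆ annulus d r (r + n) ∪ annulus d (r + n) (r + n + 1) := by
      intro x hx
      obtain ⟨h1, h2⟩ := hx
      push_cast at h2
      rcases le_total ‖x‖ (r + n) with h | h
      · exact Or.inl ⟨h1, h⟩
      · exact Or.inr ⟨h, by linarith⟩
    have hsub2 : S ∩ annulus d r (r + ((n:ℕ)+1:ℕ)) ⊆
        (S ∩ annulus d r (r + n)) ∪ (S ∩ annulus d (r + n) (r + n + 1)) := by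
      rw [← Set.inter_union_distrib_left]
      exact inter_subset_inter_right S hsub
    refine ⟨(hf1.union hf2).subset hsub2, ?_⟩
    calc (S ∩ annulus d r (r + ((n:ℕ)+1:ℕ))).ncard
        ≤ ((S ∩ annulus d r (r + n)) ∪ (S ∩ annulus d (r + n) (r + n + 1))).ncard :=
          Set.ncard_le_ncard hsub2 (hf1.union hf2)
      _ ≤ (S ∩ annulus d r (r + n)).ncard + (S ∩ annulus d (r + n) (r + n + 1)).ncard :=
          Set.ncard_union_le _ _
      _ ≤ C * (n + 1) + C := add_le_add hc1 hc2
      _ = C * (n + 1 + 1) := by ring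

set_option maxHeartbeats 1000000 in
theorem stmt6 (d : ℕ) (hd : 1 ≤ d) (S : Set (EuclideanSpace ℝ (Fin d)))
    (rSigma : ℝ) (hrSigma : 0 < rSigma)
    (hdisc : ∀ i ∈ S, ∀ j ∈ S, i ≠ j → rSigma ≤ ‖i - j‖)
    (C : ℕ)
    (hfin : ∀ R : ℝ, 0 ≤ R → (S ∩ annulus d R (R + 1)).Finite)
    (hq1D : ∀ R : ℝ, 0 ≤ R → (S ∩ annulus d R (R + 1)).ncard ≤ C)
    (μ : S → Measure ℝ) (hprob : ∀ i, IsProbabilityMeasure (μ i))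
    (hsupp : ∀ i, μ i (Icc (0 : ℝ) 1) = 1)
    (P : Measure (S → ℝ)) (hPprob : IsProbabilityMeasure P)
    (hprod : ∀ (t : Finset S) (s : S → Set ℝ), (∀ i, MeasurableSet (s i)) →
      P {ω | ∀ i ∈ t, ω i ∈ s i} = ∏ i ∈ t, μ i (s i))
    (ε : ℝ) (hε : 0 < ε)
    (δ : ℝ) (hδ0 : 0 ≤ δ) (hδ1 : δ < 1)
    (hδub : ∀ i : S, (μ i (Icc ε 1)).toReal ≤ δ)
    (a : ℝ) (ha : ((1 - δ) ^ C)⁻¹ < a) :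
    ∀ᵐ ω ∂P, ∃ N : ℕ, ∀ n : ℕ, N ≤ n →
      ∃ r ∈ Icc (a ^ n) (a ^ (n + 1) - (n : ℝ)),
        epsFree S ε ω (annulus d r (r + (n : ℝ))) := by
  classical
  haveI := hPprob
  set β : ℝ := (1 - δ) ^ C with hβdef
  have hβpos : 0 < β := pow_pos (by linarith) C
  have hβle1 : β ≤ 1 := pow_le_one₀ (by linarith) (by linarith)
  have ha1 : 1 < a := lt_of_le_of_lt ((one_le_inv₀ hβpos).mpr hβle1) ha
  have hapos : 0 < a := lt_trans one_pos ha1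
  have hb1 : 1 < a * β := by
    calc (1:ℝ) = β⁻¹ * β := (inv_mul_cancel₀ hβpos.ne').symm
      _ < a * β := mul_lt_mul_of_pos_right ha hβpos
  have hbpos : 0 < a * β := lt_trans one_pos hb1
  -- per-site bounds
  have hsite_ub : ∀ i : S, (μ i (Iic ε)).toReal ≤ 1 := by
    intro i
    haveI := hprob i
    have h1 : μ i (Iic ε) ≤ 1 := prob_le_one
    simpa using ENNReal.toReal_mono (by simp) h1
  have hsite_lb : ∀ i : S, 1 - δ ≤ (μ i (Iic ε)).toReal := by
    intro i
    haveI := hprob i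
    have hsub : Icc (0:ℝ) 1 ⊆ Iic ε ∪ Icc ε 1 := by
      intro x hx
      rcases le_total x ε with h | h
      · exact Or.inl h
      · exact Or.inr ⟨h, hx.2⟩
    have h1 : (1:ℝ≥0∞) ≤ μ i (Iic ε) + μ i (Icc ε 1) := by
      rw [← hsupp i]
      exact (measure_mono hsub).trans (measure_union_le _ _)
    have h2 : (1:ℝ) ≤ (μ i (Iic ε)).toReal + (μ i (Icc ε 1)).toReal := by
      have := ENNReal.toReal_mono
        (by exact ENNReal.add_ne_top.mpr ⟨measure_ne_top _ _, measure_ne_top _ _⟩) h1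
      rwa [ENNReal.toReal_one, ENNReal.toReal_add (measure_ne_top _ _) (measure_ne_top _ _)]
        at this
    linarith [hδub i]
  -- radii and blocks
  set Rad : ℕ → ℕ → ℝ := fun n j => a ^ n + j * (n + 1) with hRaddef
  have hRadpos : ∀ n j, 0 ≤ Rad n j := by
    intro n j
    have : (0:ℝ) < a ^ n := pow_pos hapos n
    have : (0:ℝ) ≤ (j:ℝ) * (n + 1) := by positivity
    simp only [hRaddef]
    nlinarith [pow_pos hapos n]
  have hTfin : ∀ n j : ℕ, {i : S | (i : EuclideanSpace ℝ (Fin d)) ∈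
      annulus d (Rad n j) (Rad n j + n)}.Finite := by
    intro n j
    have hpre : {i : S | (i : EuclideanSpace ℝ (Fin d)) ∈ annulus d (Rad n j) (Rad n j + n)}
        = Subtype.val ⁻¹' (S ∩ annulus d (Rad n j) (Rad n j + n)) := by
      ext i; simp [i.2]
    rw [hpre]
    exact Set.Finite.preimage (Subtype.val_injective.injOn)
      ((count_aux hfin hq1D n (Rad n j) (hRadpos n j)).1)
  set T : ℕ → ℕ → Finset S := fun n j => (hTfin n j).toFinset with hTdef
  have hTmem : ∀ n j (i : S), i ∈ T n j ↔
      (i : EuclideanSpace ℝ (Fin d)) ∈ annulus d (Rad n j) (Rad n j + n) := by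
    intro n j i
    simp [hTdef, Set.Finite.mem_toFinset]
  have hTcard : ∀ n j, (T n j).card ≤ C * (n + 1) := by
    intro n j
    have h1 : (T n j).card = {i : S | (i : EuclideanSpace ℝ (Fin d)) ∈
        annulus d (Rad n j) (Rad n j + n)}.ncard :=
      (Set.ncard_eq_toFinset_card _ (hTfin n j)).symm
    have h2 : {i : S | (i : EuclideanSpace ℝ (Fin d)) ∈
        annulus d (Rad n j) (Rad n j + n)}.ncard
        = (S ∩ annulus d (Rad n j) (Rad n j + n)).ncard := by
      rw [← Set.ncard_image_of_injective _ Subtype.val_injective]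
      congr 1
      ext x
      simp only [Set.mem_image, Set.mem_setOf_eq, Set.mem_inter_iff]
      constructor
      · rintro ⟨i, hi, rfl⟩; exact ⟨i.2, hi⟩
      · rintro ⟨hxS, hxA⟩; exact ⟨⟨x, hxS⟩, hxA, rfl⟩
    rw [h1, h2]
    exact (count_aux hfin hq1D n (Rad n j) (hRadpos n j)).2
  set q : ℕ → ℕ → ℝ := fun n j => ∏ i ∈ T n j, (μ i (Iic ε)).toReal with hqdef
  have hq_ub : ∀ n j, q n j ≤ 1 :=
    fun n j => Finset.prod_le_one (fun i _ => le_trans (by linarith [hsite_lb i]) (hsite_lb i))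
      (fun i _ => hsite_ub i)
  have hq_lb : ∀ n j : ℕ, β ^ (n + 1) ≤ q n j := by
    intro n j
    have h1 : (1 - δ) ^ ((T n j).card) ≤ q n j := by
      rw [← Finset.prod_const]
      exact Finset.prod_le_prod (fun i _ => by linarith) (fun i _ => hsite_lb i)
    have h2 : ((1 - δ) : ℝ) ^ (C * (n + 1)) ≤ (1 - δ) ^ ((T n j).card) :=
      pow_le_pow_of_le_one (by linarith) (by linarith) (hTcard n j)
    calc β ^ (n + 1) = (1 - δ) ^ (C * (n + 1)) := by rw [hβdef, ← pow_mul]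
      _ ≤ (1 - δ) ^ ((T n j).card) := h2
      _ ≤ q n j := h1
  set m : ℕ → ℕ := fun n => ⌊(a ^ (n + 1) - a ^ n) / ((n : ℝ) + 1)⌋₊ with hmdef
  have hy0 : ∀ n : ℕ, 0 ≤ (a ^ (n + 1) - a ^ n) / ((n : ℝ) + 1) := by
    intro n
    have h : a ^ n ≤ a ^ (n + 1) := by
      rw [pow_succ]
      exact le_mul_of_one_le_right (le_of_lt (pow_pos hapos n)) (le_of_lt ha1)
    have hn1 : (0 : ℝ) < (n : ℝ) + 1 := by positivity
    exact div_nonneg (by linarith) (le_of_lt hn1)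
  have hmle : ∀ n : ℕ, ((m n) : ℝ) * ((n : ℝ) + 1) ≤ a ^ (n + 1) - a ^ n := by
    intro n
    have h := Nat.floor_le (hy0 n)
    have hn1 : (0 : ℝ) < (n : ℝ) + 1 := by positivity
    have h2 := mul_le_mul_of_nonneg_right h (le_of_lt hn1)
    rwa [div_mul_cancel₀ _ hn1.ne'] at h2
  have hmgt : ∀ n : ℕ, (a ^ (n + 1) - a ^ n) / ((n : ℝ) + 1) - 1 < (m n : ℝ) := by
    intro n
    have := Nat.lt_floor_add_one ((a ^ (n + 1) - a ^ n) / ((n : ℝ) + 1))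
    have hmn : (m n : ℝ) = (⌊(a ^ (n + 1) - a ^ n) / ((n : ℝ) + 1)⌋₊ : ℝ) := by rw [hmdef]
    linarith [hmn ▸ this]
  have hdisjT : ∀ n : ℕ, ∀ j ∈ Finset.range (m n), ∀ k ∈ Finset.range (m n), j ≠ k →
      Disjoint (T n j) (T n k) := by
    intro n j _ k _ hjk
    have key : ∀ j k : ℕ, j < k → Disjoint (T n j) (T n k) := by
      intro j k hlt
      rw [Finset.disjoint_left]
      intro i hij hik
      obtain ⟨hj1, hj2⟩ := (hTmem n j i).mp hij
      obtain ⟨hk1, hk2⟩ := (hTmem n k i).mp hik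
      have hjk1 : (j : ℝ) + 1 ≤ (k : ℝ) := by exact_mod_cast hlt
      have hmul : ((j : ℝ) + 1) * ((n : ℝ) + 1) ≤ (k : ℝ) * ((n : ℝ) + 1) :=
        mul_le_mul_of_nonneg_right hjk1 (by positivity)
      simp only [hRaddef] at hj2 hk1
      nlinarith
    rcases lt_or_gt_of_ne hjk with h | h
    · exact key j k h
    · exact (key k j h).symm
  set E : ℕ → Set (S → ℝ) := fun n =>
    {ω : S → ℝ | (∀ i ∈ (∅ : Finset S), ω i ∈ (univ : Set ℝ)) ∧
      ∀ k ∈ Finset.range (m n), ∃ i ∈ T n k, ε < ω i} with hEdef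
  have hPE : ∀ n, (P (E n)).toReal = ∏ k ∈ Finset.range (m n), (1 - q n k) := by
    intro n
    have h := key_prod μ hprob P hPprob hprod ε (T n) (Finset.range (m n)) (hdisjT n)
      ∅ (fun _ => univ) (fun _ => MeasurableSet.univ) (fun _ _ => Finset.disjoint_empty_left _)
    simpa [hEdef, hqdef] using h
  have hPEb : ∀ n, (P (E n)).toReal ≤ (1 - β ^ (n + 1)) ^ (m n) := by
    intro n
    rw [hPE n]
    calc ∏ k ∈ Finset.range (m n), (1 - q n k)
        ≤ ∏ k ∈ Finset.range (m n), (1 - β ^ (n + 1)) :=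
          Finset.prod_le_prod (fun k _ => by linarith [hq_ub n k])
            (fun k _ => by linarith [hq_lb n k])
      _ = (1 - β ^ (n + 1)) ^ (m n) := by rw [Finset.prod_const, Finset.card_range]
  have hrinv0 : (0 : ℝ) ≤ (a * β)⁻¹ := inv_nonneg.mpr (le_of_lt hbpos)
  have hrinv1 : (a * β)⁻¹ < 1 := inv_lt_one_of_one_lt₀ hb1
  have ht0 : Filter.Tendsto (fun n : ℕ => (((n : ℝ) + 1) ^ 2) * ((a * β)⁻¹) ^ n)
      Filter.atTop (nhds 0) := by
    have h2 := tendsto_pow_const_mul_const_pow_of_lt_one 2 hrinv0 hrinv1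
    have h1 := tendsto_pow_const_mul_const_pow_of_lt_one 1 hrinv0 hrinv1
    have h0' := tendsto_pow_atTop_nhds_zero_of_lt_one hrinv0 hrinv1
    have heq : (fun n : ℕ => (((n : ℝ) + 1) ^ 2) * ((a * β)⁻¹) ^ n)
        = fun n : ℕ => (n : ℝ) ^ 2 * ((a * β)⁻¹) ^ n + 2 * ((n : ℝ) ^ 1 * ((a * β)⁻¹) ^ n)
          + ((a * β)⁻¹) ^ n := by
      funext n; ring
    rw [heq]
    simpa using (h2.add (h1.const_mul 2)).add h0'
  have hev : ∀ᶠ n : ℕ in Filter.atTop, (((n : ℝ) + 1) ^ 2) * ((a * β)⁻¹) ^ n ≤ β * (a - 1) := by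
    apply ht0.eventually_le_const
    nlinarith
  obtain ⟨N1, hN1⟩ := Filter.eventually_atTop.mp hev
  have hkey : ∀ n, N1 ≤ n → ((n : ℝ) + 1) ^ 2 ≤ β * (a - 1) * (a * β) ^ n := by
    intro n hn
    have h := hN1 n hn
    have hp : (0 : ℝ) < (a * β) ^ n := pow_pos hbpos n
    have hinv : ((a * β)⁻¹) ^ n * (a * β) ^ n = 1 := by
      rw [← mul_pow, inv_mul_cancel₀ hbpos.ne', one_pow]
    calc ((n : ℝ) + 1) ^ 2 = (((n : ℝ) + 1) ^ 2 * ((a * β)⁻¹) ^ n) * (a * β) ^ n := by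
          rw [mul_assoc, hinv, mul_one]
      _ ≤ β * (a - 1) * (a * β) ^ n := mul_le_mul_of_nonneg_right h (le_of_lt hp)
  have hxm : ∀ n, N1 ≤ n → (n : ℝ) ≤ β ^ (n + 1) * (m n) := by
    intro n hn
    have hn1 : (0 : ℝ) < (n : ℝ) + 1 := by positivity
    have hA0 : (0 : ℝ) < β ^ (n + 1) := pow_pos hβpos _
    have hA1 : β ^ (n + 1) ≤ 1 := pow_le_one₀ (le_of_lt hβpos) hβle1
    have hAy : β ^ (n + 1) * ((a ^ (n + 1) - a ^ n) / ((n : ℝ) + 1)) * ((n : ℝ) + 1)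
        = β * (a - 1) * (a * β) ^ n := by
      field_simp
      ring
    have hAyn : (n : ℝ) + 1 ≤ β ^ (n + 1) * ((a ^ (n + 1) - a ^ n) / ((n : ℝ) + 1)) := by
      rw [← mul_le_mul_iff_of_pos_right hn1, hAy]
      calc ((n : ℝ) + 1) * ((n : ℝ) + 1) = ((n : ℝ) + 1) ^ 2 := by ring
        _ ≤ β * (a - 1) * (a * β) ^ n := hkey n hn
    have hm1 : (a ^ (n + 1) - a ^ n) / ((n : ℝ) + 1) - 1 < (m n : ℝ) := hmgt n
    nlinarith [mul_le_mul_of_nonneg_left (le_of_lt hm1) (le_of_lt hA0)]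
  have hexp1 : Real.exp (-1) < 1 := by rw [Real.exp_lt_one_iff]; norm_num
  have hgb : ∀ n, N1 ≤ n → (P (E n)).toReal ≤ Real.exp (-1) ^ n := by
    intro n hn
    have hx1 : β ^ (n + 1) ≤ 1 := pow_le_one₀ (le_of_lt hβpos) hβle1
    have h1 : (1 - β ^ (n + 1)) ≤ Real.exp (-(β ^ (n + 1))) := by
      have := Real.add_one_le_exp (-(β ^ (n + 1)))
      linarith
    have h5 : ((m n : ℝ)) * (-(β ^ (n + 1))) ≤ -(n : ℝ) := by
      have := hxm n hn
      nlinarith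
    calc (P (E n)).toReal ≤ (1 - β ^ (n + 1)) ^ (m n) := hPEb n
      _ ≤ Real.exp (-(β ^ (n + 1))) ^ (m n) := pow_le_pow_left₀ (by linarith) h1 (m n)
      _ = Real.exp ((m n : ℝ) * (-(β ^ (n + 1)))) := (Real.exp_nat_mul _ (m n)).symm
      _ ≤ Real.exp (-(n : ℝ)) := Real.exp_le_exp.mpr h5
      _ = Real.exp (-1) ^ n := by rw [← Real.exp_nat_mul]; norm_num
  have hgsum : Summable (fun n => (P (E n)).toReal) := by
    rw [← summable_nat_add_iff N1]
    refine Summable.of_nonneg_of_le (fun n => ENNReal.toReal_nonneg) (fun n => ?_)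
      (summable_geometric_of_lt_one (Real.exp_nonneg _) hexp1)
    calc (P (E (n + N1))).toReal ≤ Real.exp (-1) ^ (n + N1) := hgb _ (Nat.le_add_left _ _)
      _ = Real.exp (-1) ^ n * Real.exp (-1) ^ N1 := pow_add _ _ _
      _ ≤ Real.exp (-1) ^ n * 1 := by
          refine mul_le_mul_of_nonneg_left ?_ (pow_nonneg (Real.exp_nonneg _) n)
          exact pow_le_one₀ (Real.exp_nonneg _) (le_of_lt hexp1)
      _ = Real.exp (-1) ^ n := mul_one _
  have htsum : (∑' n, P (E n)) ≠ ⊤ := by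
    have heq : ∀ n, P (E n) = (((P (E n)).toReal).toNNReal : ℝ≥0∞) := by
      intro n
      exact (ENNReal.ofReal_toReal (measure_ne_top P _)).symm
    rw [tsum_congr heq]
    exact ENNReal.tsum_coe_ne_top_iff_summable.mpr hgsum.toNNReal
  have hae := MeasureTheory.ae_eventually_notMem (μ := P) htsum
  filter_upwards [hae] with ω hω
  obtain ⟨N0, hN0⟩ := Filter.eventually_atTop.mp hω
  refine ⟨N0, fun n hn => ?_⟩
  have hnot := hN0 n hn
  have hnot2 : ∃ k ∈ Finset.range (m n), ∀ i ∈ T n k, ω i ≤ ε := by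
    by_contra hcon
    push_neg at hcon
    exact hnot ⟨by simp, fun k hk => hcon k hk⟩
  obtain ⟨j, hjmem, hfree⟩ := hnot2
  have hjlt : j < m n := Finset.mem_range.mp hjmem
  refine ⟨Rad n j, Set.mem_Icc.mpr ⟨?_, ?_⟩, ?_⟩
  · simp only [hRaddef]
    nlinarith [mul_nonneg (Nat.cast_nonneg j) (by positivity : (0:ℝ) ≤ (n:ℝ) + 1)]
  · have hj1 : (j : ℝ) + 1 ≤ (m n : ℝ) := by exact_mod_cast hjlt
    have h2 := hmle n
    have h3 : ((j : ℝ)) * ((n : ℝ) + 1) ≤ ((m n : ℝ) - 1) * ((n : ℝ) + 1) :=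
      mul_le_mul_of_nonneg_right (by linarith) (by positivity)
    simp only [hRaddef]
    nlinarith
  · intro i hi
    exact hfree i ((hTmem n j i).mpr hi)
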